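/- Let A ∈ ℂ^{n×n} with Schur decomposition A = U* Δ U (U unitary, Δ upper triangular) and let D_t = diag(t, …, tⁿ) for t > 0. Then for every ε > 0 there exists t₀ > 0 such that for all t ≥ t₀: ρ(A) ≤ ‖(U* D_t⁻¹)⁻¹ A (U* D_t⁻¹)‖₂ ≤ ρ(A) + ε. -/

import Mathlib

open Matrix Filter

/-- Spectral radius of a complex square matrix. -/
noncomputable def specRad {n : ℕ} (A : Matrix (Fin n) (Fin n) ℂ) : ℝ :=
  (spectralRadius ℂ A).toReal

/-- Spectral norm (operator norm induced by the Euclidean norm) of a complex square matrix. -/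
noncomputable def specNorm {n : ℕ} (A : Matrix (Fin n) (Fin n) ℂ) : ℝ :=
  ‖Matrix.toEuclideanCLM (𝕜 := ℂ) (n := Fin n) A‖

/-- The diagonal matrix `D_t = diag(t, t², …, tⁿ)`. -/
noncomputable def Dmat (n : ℕ) (t : ℝ) : Matrix (Fin n) (Fin n) ℂ :=
  Matrix.diagonal fun i => (t : ℂ) ^ ((i : ℕ) + 1)

/-- Euclidean norm of a vector in `ℂⁿ`. -/
noncomputable def euclNorm {n : ℕ} (x : Fin n → ℂ) : ℝ :=
  ‖(EuclideanSpace.equiv (Fin n) ℂ).symm x‖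

/-! Conjugating `A = U* Δ U` by `U* D_t⁻¹` gives `D_t Δ D_t⁻¹`, whose `(i, j)` entry is
`Δ i j * t ^ (i - j)`. As `Δ` is upper triangular, this tends to the diagonal part of `Δ` as
`t → ∞`, and the spectral norm of that diagonal matrix is the largest modulus of an eigenvalue
of `Δ`, i.e. `ρ(A)`; continuity of the norm gives the upper bound. The lower bound holds for
every similarity: it preserves the spectrum, and `ρ` is bounded by the operator norm. -/

open scoped Matrix.Norms.L2Operator Topology

theorem Matrix.IsUpperTriangular.diag_mem_spectrum {K ι : Type*} [Field K] [Fintype ι]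
    [DecidableEq ι] [LinearOrder ι] {M : Matrix ι ι K} (hM : M.IsUpperTriangular) (i : ι) :
    M i i ∈ spectrum K M := by
  rw [mem_spectrum_iff_isRoot_charpoly, charpoly_of_isUpperTriangular M hM, Polynomial.IsRoot,
    Polynomial.eval_prod]
  exact Finset.prod_eq_zero (Finset.mem_univ i) (by simp)

theorem Matrix.spectrum_inv_mul_mul {K ι : Type*} [Field K] [Fintype ι] [DecidableEq ι]
    (A : Matrix ι ι K) {V : Matrix ι ι K} (hV : IsUnit V) :
    spectrum K (V⁻¹ * A * V) = spectrum K A := by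
  lift V to (Matrix ι ι K)ˣ using hV
  rw [← coe_units_inv, spectrum.units_conjugate']

theorem Matrix.spectralRadius_le_l2_opNNNorm {𝕜 ι : Type*} [RCLike 𝕜] [Fintype ι]
    [DecidableEq ι] (A : Matrix ι ι 𝕜) : spectralRadius 𝕜 A ≤ ‖A‖₊ := by
  cases isEmpty_or_nonempty ι
  -- the zero ring is not a `NormOneClass`, but there the spectrum is empty
  · simp [spectralRadius, spectrum.of_subsingleton]
  · exact spectrum.spectralRadius_le_nnnorm A

theorem Matrix.inv_conjTranspose_mul_inv_mul_mul {ι K : Type*} [Fintype ι] [DecidableEq ι]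
    [Field K] [StarRing K] {U D : Matrix ι ι K} (M : Matrix ι ι K) (hU : Uᴴ * U = 1)
    (hD : IsUnit D) : (Uᴴ * D⁻¹)⁻¹ * (Uᴴ * M * U) * (Uᴴ * D⁻¹) = D * M * D⁻¹ := by
  have hUUh : U * Uᴴ = 1 := mul_eq_one_comm.mp hU
  rw [mul_inv_rev, nonsing_inv_nonsing_inv _ ((isUnit_iff_isUnit_det D).mp hD),
    inv_eq_left_inv hUUh]
  simp only [Matrix.mul_assoc, ← Matrix.mul_assoc U Uᴴ, hUUh, Matrix.one_mul]

section SpectralRadius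

variable {n : ℕ}

theorem specNorm_eq_norm (A : Matrix (Fin n) (Fin n) ℂ) : specNorm A = ‖A‖ := rfl

theorem specRad_le_specNorm (A : Matrix (Fin n) (Fin n) ℂ) : specRad A ≤ specNorm A := by
  simpa [specRad, specNorm_eq_norm] using
    ENNReal.toReal_mono ENNReal.coe_ne_top (spectralRadius_le_l2_opNNNorm A)

theorem specRad_inv_mul_mul (A : Matrix (Fin n) (Fin n) ℂ) {V : Matrix (Fin n) (Fin n) ℂ}
    (hV : IsUnit V) : specRad (V⁻¹ * A * V) = specRad A := by
  rw [specRad, spectralRadius, spectrum_inv_mul_mul A hV, ← spectralRadius, ← specRad]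

theorem norm_le_specRad_of_mem_spectrum {A : Matrix (Fin n) (Fin n) ℂ} {k : ℂ}
    (hk : k ∈ spectrum ℂ A) : ‖k‖ ≤ specRad A := by
  have hk' : (‖k‖₊ : ENNReal) ≤ spectralRadius ℂ A :=
    le_iSup₂ (f := fun k _ => (‖k‖₊ : ENNReal)) k hk
  simpa [specRad] using ENNReal.toReal_mono
    (ne_top_of_le_ne_top ENNReal.coe_ne_top (spectralRadius_le_l2_opNNNorm A)) hk'

theorem specNorm_diagonal_diag_le_specRad {Δ : Matrix (Fin n) (Fin n) ℂ}
    (hΔ : Δ.IsUpperTriangular) : specNorm (diagonal Δ.diag) ≤ specRad Δ := by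
  rw [specNorm_eq_norm, l2_opNorm_diagonal]
  exact (pi_norm_le_iff_of_nonneg ENNReal.toReal_nonneg).2 fun i =>
    norm_le_specRad_of_mem_spectrum (hΔ.diag_mem_spectrum i)

end SpectralRadius

section Scaling

variable {n : ℕ} {t : ℝ}

theorem isUnit_Dmat (ht : t ≠ 0) : IsUnit (Dmat n t) := by
  rw [Dmat, isUnit_diagonal, Pi.isUnit_iff]
  exact fun i => (pow_ne_zero _ (Complex.ofReal_ne_zero.2 ht)).isUnit

theorem Dmat_inv (ht : t ≠ 0) :
    (Dmat n t)⁻¹ = diagonal fun i : Fin n => ((t : ℂ) ^ ((i : ℕ) + 1))⁻¹ := by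
  refine inv_eq_right_inv ?_
  rw [Dmat, diagonal_mul_diagonal, ← diagonal_one]
  exact congrArg diagonal
    (funext fun i => mul_inv_cancel₀ (pow_ne_zero _ (Complex.ofReal_ne_zero.2 ht)))

theorem Dmat_mul_mul_inv_apply (ht : t ≠ 0) (M : Matrix (Fin n) (Fin n) ℂ) (i j : Fin n) :
    (Dmat n t * M * (Dmat n t)⁻¹) i j = M i j * (t : ℂ) ^ ((i : ℤ) - j) := by
  have hexp : (i : ℤ) - j = (((i : ℕ) + 1 : ℕ) : ℤ) - (((j : ℕ) + 1 : ℕ) : ℤ) := by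
    push_cast; ring
  rw [Dmat_inv ht, Dmat, mul_diagonal, diagonal_mul, hexp,
    zpow_sub₀ (Complex.ofReal_ne_zero.2 ht), zpow_natCast, zpow_natCast, div_eq_mul_inv]
  ring

theorem tendsto_Dmat_mul_mul_inv {M : Matrix (Fin n) (Fin n) ℂ} (hM : M.IsUpperTriangular) :
    Tendsto (fun t => Dmat n t * M * (Dmat n t)⁻¹) atTop (𝓝 (diagonal M.diag)) := by
  refine tendsto_pi_nhds.2 fun i => tendsto_pi_nhds.2 fun j => ?_
  have hentry : (fun t : ℝ => M i j * (t : ℂ) ^ ((i : ℤ) - j)) =ᶠ[atTop]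
      fun t => (Dmat n t * M * (Dmat n t)⁻¹) i j :=
    (eventually_ne_atTop 0).mono fun t ht => (Dmat_mul_mul_inv_apply ht M i j).symm
  refine Tendsto.congr' hentry ?_
  rcases lt_trichotomy i j with hij | rfl | hij
  · have hpow : Tendsto (fun t : ℝ => (t : ℂ) ^ ((i : ℤ) - j)) atTop (𝓝 0) := by
      simpa [Function.comp_def] using (Complex.continuous_ofReal.tendsto 0).comp
        (tendsto_zpow_atTop_zero (by omega : (i : ℤ) - j < 0))
    simpa [diagonal_apply_ne _ hij.ne] using hpow.const_mul (M i j)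
  · simp
  · simp [hM hij, diagonal_apply_ne _ hij.ne']

end Scaling

/-- With Schur decomposition `A = U* Δ U` and `D_t = diag(t, …, tⁿ)`, for every
`ε > 0` there is `t₀ > 0` such that for all `t ≥ t₀`:
`ρ(A) ≤ ‖(U* D_t⁻¹)⁻¹ A (U* D_t⁻¹)‖₂ ≤ ρ(A) + ε`. -/
theorem schur_scaling_norm_bounds {n : ℕ} (A U Δ : Matrix (Fin n) (Fin n) ℂ)
    (hU : Uᴴ * U = 1) (hΔ : Δ.BlockTriangular id) (hA : A = Uᴴ * Δ * U)
    (ε : ℝ) (hε : 0 < ε) :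
    ∃ t₀ : ℝ, 0 < t₀ ∧ ∀ t : ℝ, t₀ ≤ t →
      specRad A ≤ specNorm ((Uᴴ * (Dmat n t)⁻¹)⁻¹ * A * (Uᴴ * (Dmat n t)⁻¹)) ∧
      specNorm ((Uᴴ * (Dmat n t)⁻¹)⁻¹ * A * (Uᴴ * (Dmat n t)⁻¹)) ≤ specRad A + ε := by
  have hspec : specRad A = specRad Δ := by
    rw [hA, ← inv_eq_left_inv hU]
    exact specRad_inv_mul_mul Δ ((isUnit_iff_isUnit_det U).2 (isUnit_det_of_left_inverse hU))
  have hsimilar (t : ℝ) (ht : t ≠ 0) : (Uᴴ * (Dmat n t)⁻¹)⁻¹ * A * (Uᴴ * (Dmat n t)⁻¹) =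
      Dmat n t * Δ * (Dmat n t)⁻¹ := by
    rw [hA, inv_conjTranspose_mul_inv_mul_mul Δ hU (isUnit_Dmat ht)]
  have hupper : ∀ᶠ t in atTop, 0 < t ∧
      specNorm ((Uᴴ * (Dmat n t)⁻¹)⁻¹ * A * (Uᴴ * (Dmat n t)⁻¹)) ≤ specRad A + ε := by
    filter_upwards [eventually_gt_atTop 0, (tendsto_Dmat_mul_mul_inv hΔ).norm.eventually
      (gt_mem_nhds (lt_add_of_pos_right _ hε))] with t ht hnorm
    rw [hsimilar t ht.ne', hspec]
    exact ⟨ht, hnorm.le.trans (by gcongr; exact specNorm_diagonal_diag_le_specRad hΔ)⟩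
  obtain ⟨t₀, ht₀⟩ := hupper.exists_forall_of_atTop
  refine ⟨max t₀ 1, by positivity, fun t ht => ⟨?_, (ht₀ t (le_of_max_le_left ht)).2⟩⟩
  have hV : IsUnit (Uᴴ * (Dmat n t)⁻¹) :=
    ((isUnit_iff_isUnit_det _).2 (isUnit_det_of_right_inverse hU)).mul
      (isUnit_nonsing_inv_iff.2 (isUnit_Dmat (ht₀ t (le_of_max_le_left ht)).1.ne'))
  rw [← specRad_inv_mul_mul A hV]
  exact specRad_le_specNorm _
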